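/- arXiv:1709.00378 — 3 statements merged into one kernel-verified Lean document; each statement's English description precedes it below -/
import Mathlib

section
/- Let L ⊂ ℝⁿ be a full-rank lattice, 0 < α < 1/2, p a positive integer, and t ∈ ℝⁿ. Let y ∈ L satisfy ‖y − t‖ < p·α·λ1(L), and let r ∈ L be any lattice point with r − y ∈ pL. Then dist((r − t)/p, L) < α·λ1(L) (so, since α < 1/2, the closest lattice point to (r − t)/p is unique), and the unique closest lattice point c ∈ L to (r − t)/p satisfies y = r − p·c. -/
/-!
Write `r - y = p • z` with `z ∈ L`. Then `z - (r - t)/p = -(y - t)/p` has norm `< α λ₁ ≤ λ₁/2`,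
which bounds the distance and makes `z` the unique closest lattice point: any other `w ∈ L`
has `‖w - z‖ ≥ λ₁`, so by the triangle inequality it is farther than `λ₁/2` from `(r - t)/p`.
-/

def Matrix.columnLattice {m n : Type*} [Fintype n] (B : Matrix m n ℝ) :
    AddSubgroup (EuclideanSpace ℝ m) where
  carrier := {v | ∃ c : n → ℤ, ∀ i, v i = ∑ j, B i j * (c j : ℝ)}
  zero_mem' := ⟨0, by simp⟩
  add_mem' := by
    rintro u v ⟨c, hc⟩ ⟨d, hd⟩
    exact ⟨c + d, fun i => by simp [hc, hd, mul_add, Finset.sum_add_distrib]⟩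
  neg_mem' := by
    rintro v ⟨c, hc⟩
    exact ⟨-c, fun i => by simp [hc]⟩

theorem lt_norm_sub_of_norm_sub_lt_half {E : Type*} [SeminormedAddCommGroup E]
    {L : AddSubgroup E} {lam : ℝ} (hsep : ∀ v ∈ L, v ≠ 0 → lam ≤ ‖v‖)
    {x c z : E} (hc : c ∈ L) (hz : z ∈ L) (hzc : z ≠ c) (hcx : ‖c - x‖ < lam / 2) :
    ‖c - x‖ < ‖z - x‖ := by
  have hlam : lam ≤ ‖z - c‖ := hsep _ (L.sub_mem hz hc) (sub_ne_zero.mpr hzc)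
  have htri : ‖z - c‖ ≤ ‖z - x‖ + ‖c - x‖ := by
    simpa only [sub_sub_sub_cancel_right] using norm_sub_le (z - x) (c - x)
  linarith

theorem sub_inv_smul_sub_eq_neg {K E : Type*} [DivisionRing K] [AddCommGroup E] [Module K E]
    {p : K} (hp : p ≠ 0) {r y t z : E} (h : r - y = p • z) :
    z - p⁻¹ • (r - t) = -(p⁻¹ • (y - t)) := by
  rw [show r - t = p • z + (y - t) by rw [← h]; abel, smul_add, inv_smul_smul₀ hp]
  abel

theorem norm_sub_inv_smul_sub {E : Type*} [SeminormedAddCommGroup E] [NormedSpace ℝ E]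
    {p : ℝ} (hp : 0 < p) {r y t z : E} (h : r - y = p • z) :
    ‖z - p⁻¹ • (r - t)‖ = p⁻¹ * ‖y - t‖ := by
  rw [sub_inv_smul_sub_eq_neg hp.ne' h, norm_neg, norm_smul, Real.norm_of_nonneg (by positivity)]

theorem bdd_enum_step_general {n : ℕ}
    (B : Matrix (Fin n) (Fin n) ℝ)
    (L : Set (EuclideanSpace ℝ (Fin n)))
    (hL : L = {v | ∃ c : Fin n → ℤ, ∀ i, v i = ∑ j, B i j * (c j : ℝ)})
    (lam : ℝ)
    (hlam : IsLeast {r : ℝ | ∃ x ∈ L, x ≠ 0 ∧ ‖x‖ = r} lam)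
    (α : ℝ) (hα : α < 1 / 2)
    (p : ℕ)
    (t y r : EuclideanSpace ℝ (Fin n))
    (hyt : ‖y - t‖ < (p : ℝ) * α * lam)
    (hry : ∃ z ∈ L, r - y = (p : ℝ) • z) :
    Metric.infDist ((p : ℝ)⁻¹ • (r - t)) L < α * lam ∧
    ∃ c ∈ L,
      (∀ z ∈ L, z ≠ c →
        ‖c - (p : ℝ)⁻¹ • (r - t)‖ < ‖z - (p : ℝ)⁻¹ • (r - t)‖) ∧
      y = r - (p : ℝ) • c := by
  obtain ⟨Λ, rfl⟩ : ∃ Λ : AddSubgroup _, L = Λ := ⟨B.columnLattice, hL⟩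
  obtain ⟨z, hz, hrz⟩ := hry
  have hp : (0 : ℝ) < p := by
    rcases p.eq_zero_or_pos with rfl | hp
    · exact absurd hyt (by simp)
    · exact_mod_cast hp
  have hlam0 : 0 ≤ lam := by
    obtain ⟨x, -, -, rfl⟩ := hlam.1
    exact norm_nonneg x
  have hzx : ‖z - (p : ℝ)⁻¹ • (r - t)‖ < α * lam := by
    rw [norm_sub_inv_smul_sub hp hrz, inv_mul_lt_iff₀ hp, ← mul_assoc]
    exact hyt
  refine ⟨?_, z, hz, fun w hw hwz => ?_, by rw [← hrz, sub_sub_cancel]⟩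
  · rw [← norm_sub_rev, ← dist_eq_norm] at hzx
    exact (Metric.infDist_le_dist_of_mem hz).trans_lt hzx
  · refine lt_norm_sub_of_norm_sub_lt_half (fun v hv hv0 => hlam.2 ⟨v, hv, hv0, rfl⟩)
      hz hw hwz (hzx.trans_le ?_)
    nlinarith

/-- Let `L ⊂ ℝⁿ` be a full-rank lattice, `0 < α < 1/2`, `p` a positive
integer, `t ∈ ℝⁿ`, `y ∈ L` with `‖y − t‖ < p·α·λ₁(L)`, and `r ∈ L` with `r − y ∈ pL`.
Then `dist((r − t)/p, L) < α·λ₁(L)`, and the unique closest lattice point `c` to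
`(r − t)/p` satisfies `y = r − p·c`. -/
theorem bdd_enum_step {n : ℕ}
    (B : Matrix (Fin n) (Fin n) ℝ) (hB : IsUnit B.det)
    (L : Set (EuclideanSpace ℝ (Fin n)))
    (hL : L = {v | ∃ c : Fin n → ℤ, ∀ i, v i = ∑ j, B i j * (c j : ℝ)})
    (lam : ℝ)
    (hlam : IsLeast {r : ℝ | ∃ x ∈ L, x ≠ 0 ∧ ‖x‖ = r} lam)
    (α : ℝ) (hα0 : 0 < α) (hα : α < 1 / 2)
    (p : ℕ) (hp : 0 < p)
    (t y r : EuclideanSpace ℝ (Fin n))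
    (hy : y ∈ L) (hyt : ‖y - t‖ < (p : ℝ) * α * lam)
    (hr : r ∈ L) (hry : ∃ z ∈ L, r - y = (p : ℝ) • z) :
    Metric.infDist ((p : ℝ)⁻¹ • (r - t)) L < α * lam ∧
    ∃ c ∈ L,
      (∀ z ∈ L, z ≠ c →
        ‖c - (p : ℝ)⁻¹ • (r - t)‖ < ‖z - (p : ℝ)⁻¹ • (r - t)‖) ∧
      y = r - (p : ℝ) • c :=
  bdd_enum_step_general B L hL lam hlam α hα p t y r hyt hry
end

section
/- Let L ⊂ ℝⁿ be a full-rank lattice with basis matrix B ∈ ℝ^{n×n} (so L = {Bx : x ∈ ℤⁿ}), let t ∈ ℝⁿ, let 0 < α < 1/2, and let p be a positive integer. Then for every lattice point y ∈ L with ‖y − t‖ < p·α·λ1(L) there exists s ∈ {0,1,…,p−1}ⁿ such that dist((Bs − t)/p, L) < α·λ1(L) and y = Bs − p·c, where c ∈ L is the unique closest lattice point to (Bs − t)/p. In particular, the enumeration that ranges over all s ∈ {0,…,p−1}ⁿ and outputs Bs − p·c collects every lattice point within distance p·α·λ1(L) of t. -/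
/-!
Reduce the coordinates `a` of `y` modulo `p`: with `s = a mod p` and `c = -B ⌊a / p⌋` we get
`y = Bs - p c`, hence `c - (Bs - t) / p = -(y - t) / p` has norm `< α λ₁`. Any other lattice
point `z` satisfies `λ₁ ≤ ‖z - c‖`, so it is at distance `> (1 - α) λ₁ > α λ₁` from `(Bs - t) / p`.
-/

open Finset

variable {n : ℕ}

def Matrix.colLattice (B : Matrix (Fin n) (Fin n) ℝ) : AddSubgroup (EuclideanSpace ℝ (Fin n)) where
  carrier := {v | ∃ c : Fin n → ℤ, ∀ i, v i = ∑ j, B i j * (c j : ℝ)}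
  zero_mem' := ⟨0, by simp⟩
  add_mem' := by
    rintro _ _ ⟨a, ha⟩ ⟨b, hb⟩
    exact ⟨a + b, fun i => by simp [ha, hb, mul_add, sum_add_distrib]⟩
  neg_mem' := by
    rintro _ ⟨a, ha⟩
    exact ⟨-a, fun i => by simp [ha]⟩

theorem Matrix.exists_residue_decomposition (B : Matrix (Fin n) (Fin n) ℝ) {p : ℕ} (hp : 0 < p)
    {y : EuclideanSpace ℝ (Fin n)} (hy : y ∈ B.colLattice) :
    ∃ s : Fin n → ℕ, (∀ i, s i < p) ∧
      ∀ Bs : EuclideanSpace ℝ (Fin n), (∀ i, Bs i = ∑ j, B i j * (s j : ℝ)) →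
        ∃ c ∈ B.colLattice, y = Bs - (p : ℝ) • c := by
  obtain ⟨a, ha⟩ := hy
  have hres : ∀ j, (((a j % p).toNat : ℕ) : ℤ) = a j % p := fun j =>
    Int.toNat_of_nonneg (Int.emod_nonneg _ (by omega))
  refine ⟨fun j => (a j % p).toNat, fun j => ?_, fun Bs hBs => ?_⟩
  · have := Int.emod_lt_of_pos (a j) (by omega : (0 : ℤ) < p)
    have := hres j
    dsimp only
    omega
  refine ⟨WithLp.toLp 2 fun i => ∑ j, B i j * ((-(a j / p) : ℤ) : ℝ), ⟨_, fun i => rfl⟩, ?_⟩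
  ext i
  simp only [PiLp.sub_apply, PiLp.smul_apply, smul_eq_mul, hBs, ha, mul_sum, ← sum_sub_distrib]
  refine sum_congr rfl fun j _ => ?_
  have hdiv : ((a j : ℤ) : ℝ) = ((a j % p).toNat : ℝ) + p * ((a j / p : ℤ) : ℝ) := by
    have := Int.emod_add_mul_ediv (a j) p
    rw [← hres j] at this
    exact_mod_cast this.symm
  rw [hdiv]
  push_cast
  ring

theorem norm_sub_inv_smul_sub_s5 {E : Type*} [SeminormedAddCommGroup E] [NormedSpace ℝ E] {r : ℝ}
    (hr : r ≠ 0) (b c t : E) :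
    ‖c - r⁻¹ • (b - t)‖ = ‖b - r • c - t‖ / |r| := by
  have : c - r⁻¹ • (b - t) = -(r⁻¹ • (b - r • c - t)) := by
    simp only [smul_sub, smul_smul, inv_mul_cancel₀ hr, one_smul]
    abel
  rw [this, norm_neg, norm_smul, norm_inv, Real.norm_eq_abs, inv_mul_eq_div]

theorem AddSubgroup.norm_sub_lt_norm_sub_of_two_mul_lt {E : Type*} [SeminormedAddCommGroup E]
    {L : AddSubgroup E} {lam : ℝ} (hmin : ∀ x ∈ L, x ≠ 0 → lam ≤ ‖x‖) {c u : E} (hc : c ∈ L)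
    (hcu : 2 * ‖c - u‖ < lam) {z : E} (hz : z ∈ L) (hzc : z ≠ c) : ‖c - u‖ < ‖z - u‖ := by
  have hlam : lam ≤ ‖z - c‖ := hmin _ (L.sub_mem hz hc) (sub_ne_zero.mpr hzc)
  have htri := norm_sub_le_norm_sub_add_norm_sub z u c
  rw [norm_sub_rev u c] at htri
  linarith

theorem enum_collects_all_close_lattice_points_general {n : ℕ}
    (B : Matrix (Fin n) (Fin n) ℝ)
    (L : Set (EuclideanSpace ℝ (Fin n)))
    (hL : L = {v | ∃ c : Fin n → ℤ, ∀ i, v i = ∑ j, B i j * (c j : ℝ)})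
    (lam : ℝ)
    (hlam : IsLeast {r : ℝ | ∃ x ∈ L, x ≠ 0 ∧ ‖x‖ = r} lam)
    (α : ℝ) (hα : α < 1 / 2)
    (p : ℕ) (hp : 0 < p)
    (t y : EuclideanSpace ℝ (Fin n))
    (hy : y ∈ L) (hyt : ‖y - t‖ < (p : ℝ) * α * lam) :
    ∃ s : Fin n → ℕ, (∀ i, s i < p) ∧
      ∀ Bs : EuclideanSpace ℝ (Fin n), (∀ i, Bs i = ∑ j, B i j * (s j : ℝ)) →
        Metric.infDist ((p : ℝ)⁻¹ • (Bs - t)) L < α * lam ∧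
        ∃ c ∈ L,
          (∀ z ∈ L, z ≠ c →
            ‖c - (p : ℝ)⁻¹ • (Bs - t)‖ < ‖z - (p : ℝ)⁻¹ • (Bs - t)‖) ∧
          y = Bs - (p : ℝ) • c := by
  change L = B.colLattice at hL
  subst hL
  have hmin : ∀ x ∈ B.colLattice, x ≠ 0 → lam ≤ ‖x‖ := fun x hx hx0 => hlam.2 ⟨x, hx, hx0, rfl⟩
  have hlam0 : 0 < lam := by
    obtain ⟨x, -, hx0, rfl⟩ := hlam.1
    exact norm_pos_iff.mpr hx0
  have hp' : (0 : ℝ) < p := by exact_mod_cast hp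
  obtain ⟨s, hs, hdec⟩ := B.exists_residue_decomposition hp hy
  refine ⟨s, hs, fun Bs hBs => ?_⟩
  obtain ⟨c, hc, rfl⟩ := hdec Bs hBs
  have hcu : ‖c - (p : ℝ)⁻¹ • (Bs - t)‖ < α * lam := by
    rw [norm_sub_inv_smul_sub_s5 hp'.ne', abs_of_pos hp', div_lt_iff₀ hp']
    linarith
  refine ⟨(Metric.infDist_le_dist_of_mem hc).trans_lt ?_, c, hc, fun z hz hzc =>
    AddSubgroup.norm_sub_lt_norm_sub_of_two_mul_lt hmin hc (by nlinarith) hz hzc, rfl⟩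
  rwa [dist_comm, dist_eq_norm]

/-- Enumeration via coset representatives: for a full-rank lattice
`L = {Bx : x ∈ ℤⁿ}`, `0 < α < 1/2`, a positive integer `p`, and any `y ∈ L` with
`‖y − t‖ < p·α·λ₁(L)`, there is `s ∈ {0,…,p−1}ⁿ` such that
`dist((Bs − t)/p, L) < α·λ₁(L)` and `y = Bs − p·c` where `c` is the unique closest
lattice point to `(Bs − t)/p`. -/
theorem enum_collects_all_close_lattice_points {n : ℕ}
    (B : Matrix (Fin n) (Fin n) ℝ) (hB : IsUnit B.det)
    (L : Set (EuclideanSpace ℝ (Fin n)))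
    (hL : L = {v | ∃ c : Fin n → ℤ, ∀ i, v i = ∑ j, B i j * (c j : ℝ)})
    (lam : ℝ)
    (hlam : IsLeast {r : ℝ | ∃ x ∈ L, x ≠ 0 ∧ ‖x‖ = r} lam)
    (α : ℝ) (hα0 : 0 < α) (hα : α < 1 / 2)
    (p : ℕ) (hp : 0 < p)
    (t y : EuclideanSpace ℝ (Fin n))
    (hy : y ∈ L) (hyt : ‖y - t‖ < (p : ℝ) * α * lam) :
    ∃ s : Fin n → ℕ, (∀ i, s i < p) ∧
      ∀ Bs : EuclideanSpace ℝ (Fin n), (∀ i, Bs i = ∑ j, B i j * (s j : ℝ)) →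
        Metric.infDist ((p : ℝ)⁻¹ • (Bs - t)) L < α * lam ∧
        ∃ c ∈ L,
          (∀ z ∈ L, z ≠ c →
            ‖c - (p : ℝ)⁻¹ • (Bs - t)‖ < ‖z - (p : ℝ)⁻¹ • (Bs - t)‖) ∧
          y = Bs - (p : ℝ) • c :=
  enum_collects_all_close_lattice_points_general B L hL lam hlam α hα p hp t y hy hyt
end

section
/- Let L ⊂ ℝⁿ be a full-rank lattice, t ∈ ℝⁿ, and p a positive integer. Then the set {y ∈ L : ‖y − t‖ < (p/2)·λ1(L)} has at most pⁿ elements; indeed, any two distinct lattice points in this set lie in distinct cosets of pL in L. -/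
/-!
If `y - z = p • w` with `w ≠ 0` in `L`, then `p λ₁ ≤ p ‖w‖ = ‖y - z‖ ≤ ‖y - t‖ + ‖z - t‖`, so two
distinct points of the ball of radius `p λ₁ / 2` never lie in the same coset of `pL`.
Points of `L` whose integer coordinates agree modulo `p` lie in the same coset of `pL`, so
reducing coordinates modulo `p` is injective on the ball, which bounds it by `pⁿ`.
-/

theorem eq_of_sub_eq_smul_of_norm_sub_lt {E : Type*} [SeminormedAddCommGroup E]
    [NormedSpace ℝ E] {lam c : ℝ} (hc : 0 ≤ c) {t y z w : E} (hw : w ≠ 0 → lam ≤ ‖w‖)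
    (hy : ‖y - t‖ < c / 2 * lam) (hz : ‖z - t‖ < c / 2 * lam) (h : y - z = c • w) :
    y = z := by
  by_contra hne
  have hw0 : w ≠ 0 := by
    rintro rfl
    exact hne (sub_eq_zero.mp (by simpa using h))
  have := calc
    c * lam ≤ c * ‖w‖ := mul_le_mul_of_nonneg_left (hw hw0) hc
    _ = ‖y - z‖ := by rw [h, norm_smul, Real.norm_of_nonneg hc]
    _ = ‖(y - t) - (z - t)‖ := by rw [sub_sub_sub_cancel_right]
    _ ≤ ‖y - t‖ + ‖z - t‖ := norm_sub_le _ _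
    _ < c * lam := by linarith
  exact this.false

theorem finite_and_ncard_le_pow_of_eq_of_sub_eq_nsmul {ι E : Type*} [Fintype ι]
    [AddCommGroup E] (φ : (ι → ℤ) →+ E) (p : ℕ) [NeZero p] {S : Set E}
    (hS : S ⊆ Set.range φ)
    (hsep : ∀ y ∈ S, ∀ z ∈ S, ∀ w ∈ Set.range φ, y - z = p • w → y = z) :
    S.Finite ∧ S.ncard ≤ p ^ Fintype.card ι := by
  choose c hc using fun y : S => hS y.2
  let f : S → ι → ZMod p := fun y j => c y j
  have hf : Function.Injective f := by
    intro y z hyz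
    have hdvd (j : ι) : (p : ℤ) ∣ c y j - c z j := by
      rw [← ZMod.intCast_zmod_eq_zero_iff_dvd, Int.cast_sub, sub_eq_zero]
      exact congrFun hyz j
    choose d hd using hdvd
    have hsub : c y - c z = p • d := funext fun j => by simp [hd j]
    refine Subtype.ext (hsep y y.2 z z.2 (φ d) ⟨d, rfl⟩ ?_)
    rw [← hc y, ← hc z, ← map_sub, hsub, map_nsmul]
  have : Finite S := Finite.of_injective f hf
  refine ⟨Set.toFinite S, ?_⟩
  calc S.ncard = Nat.card S := (Nat.card_coe_set_eq S).symm
    _ ≤ Nat.card (ι → ZMod p) := Nat.card_le_card_of_injective f hf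
    _ = p ^ Fintype.card ι := by rw [Nat.card_fun, Nat.card_zmod, Nat.card_eq_fintype_card]

def Matrix.latticeHom {n : ℕ} (B : Matrix (Fin n) (Fin n) ℝ) :
    (Fin n → ℤ) →+ EuclideanSpace ℝ (Fin n) :=
  AddMonoidHom.mk' (fun c => WithLp.toLp 2 fun i => ∑ j, B i j * (c j : ℝ)) fun a b => by
    ext i
    simp [mul_add, Finset.sum_add_distrib]

theorem Matrix.range_latticeHom {n : ℕ} (B : Matrix (Fin n) (Fin n) ℝ) :
    Set.range B.latticeHom = {v | ∃ c : Fin n → ℤ, ∀ i, v i = ∑ j, B i j * (c j : ℝ)} := by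
  ext v
  constructor
  · rintro ⟨c, rfl⟩
    exact ⟨c, fun i => rfl⟩
  · rintro ⟨c, hc⟩
    exact ⟨c, by ext i; exact (hc i).symm⟩

theorem ball_lattice_points_card_le_general {n : ℕ}
    (B : Matrix (Fin n) (Fin n) ℝ)
    (L : Set (EuclideanSpace ℝ (Fin n)))
    (hL : L = {v | ∃ c : Fin n → ℤ, ∀ i, v i = ∑ j, B i j * (c j : ℝ)})
    (lam : ℝ)
    (hlam : IsLeast {r : ℝ | ∃ x ∈ L, x ≠ 0 ∧ ‖x‖ = r} lam)
    (p : ℕ) (hp : 0 < p)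
    (t : EuclideanSpace ℝ (Fin n)) :
    ({y ∈ L | ‖y - t‖ < ((p : ℝ) / 2) * lam}).Finite ∧
    ({y ∈ L | ‖y - t‖ < ((p : ℝ) / 2) * lam}).ncard ≤ p ^ n ∧
    (∀ y ∈ {y ∈ L | ‖y - t‖ < ((p : ℝ) / 2) * lam},
     ∀ z ∈ {y ∈ L | ‖y - t‖ < ((p : ℝ) / 2) * lam},
      y ≠ z → ¬ ∃ w ∈ L, y - z = (p : ℝ) • w) := by
  have : NeZero p := ⟨hp.ne'⟩
  set S := {y ∈ L | ‖y - t‖ < ((p : ℝ) / 2) * lam}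
  have hsep : ∀ y ∈ S, ∀ z ∈ S, ∀ w ∈ L, y - z = (p : ℝ) • w → y = z :=
    fun y hy z hz w hw h => eq_of_sub_eq_smul_of_norm_sub_lt p.cast_nonneg
      (fun hw0 => hlam.2 ⟨w, hw, hw0, rfl⟩) hy.2 hz.2 h
  rw [← B.range_latticeHom] at hL
  subst hL
  obtain ⟨hfin, hcard⟩ := finite_and_ncard_le_pow_of_eq_of_sub_eq_nsmul B.latticeHom p
    (fun y hy => hy.1) fun y hy z hz w hw h =>
      hsep y hy z hz w hw (by rwa [Nat.cast_smul_eq_nsmul])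
  rw [Fintype.card_fin] at hcard
  exact ⟨hfin, hcard, fun y hy z hz hne ⟨w, hw, h⟩ => hne (hsep y hy z hz w hw h)⟩

/-- For a full-rank lattice `L ⊂ ℝⁿ`, `t ∈ ℝⁿ` and a positive integer
`p`, the set `{y ∈ L : ‖y − t‖ < (p/2)·λ₁(L)}` has at most `pⁿ` elements; indeed any
two distinct lattice points in this set lie in distinct cosets of `pL` in `L`. -/
theorem ball_lattice_points_card_le {n : ℕ}
    (B : Matrix (Fin n) (Fin n) ℝ) (hB : IsUnit B.det)
    (L : Set (EuclideanSpace ℝ (Fin n)))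
    (hL : L = {v | ∃ c : Fin n → ℤ, ∀ i, v i = ∑ j, B i j * (c j : ℝ)})
    (lam : ℝ)
    (hlam : IsLeast {r : ℝ | ∃ x ∈ L, x ≠ 0 ∧ ‖x‖ = r} lam)
    (p : ℕ) (hp : 0 < p)
    (t : EuclideanSpace ℝ (Fin n)) :
    ({y ∈ L | ‖y - t‖ < ((p : ℝ) / 2) * lam}).Finite ∧
    ({y ∈ L | ‖y - t‖ < ((p : ℝ) / 2) * lam}).ncard ≤ p ^ n ∧
    (∀ y ∈ {y ∈ L | ‖y - t‖ < ((p : ℝ) / 2) * lam},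
     ∀ z ∈ {y ∈ L | ‖y - t‖ < ((p : ℝ) / 2) * lam},
      y ≠ z → ¬ ∃ w ∈ L, y - z = (p : ℝ) • w) :=
  ball_lattice_points_card_le_general B L hL lam hlam p hp t
end
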